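/- arXiv:2411.13038 — 12 statements merged into one kernel-verified Lean document; each statement's English description precedes it below -/
import Mathlib

section
/- For the generalized Fibonacci sequence, for every positive integer n one has a_{2n−1} + a_{2n+1} = (a² + 4)·a_n² + 2·(−1)^n. -/
theorem genFib_trace (a : ℤ) (ha : 1 ≤ a) (f : ℕ → ℤ) (h0 : f 0 = 0) (h1 : f 1 = 1)
    (hrec : ∀ n, f (n + 2) = a * f (n + 1) + f n) :
    ∀ n : ℕ, 0 < n →
      f (2 * n - 1) + f (2 * n + 1) = (a ^ 2 + 4) * (f n) ^ 2 + 2 * (-1) ^ n := by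
  -- Cassini's identity
  have cassini : ∀ n : ℕ, f (n + 2) * f n - f (n + 1) ^ 2 = (-1) ^ (n + 1) := by
    intro n
    induction n with
    | zero => simp [hrec 0, h0, h1]
    | succ m ih =>
      have h2 := hrec m
      have h3 := hrec (m + 1)
      have : f (m + 3) * f (m + 1) - f (m + 2) ^ 2
          = -(f (m + 2) * f m - f (m + 1) ^ 2) := by
        rw [show m + 3 = m + 1 + 2 from rfl, h3, h2]; ring
      rw [show m + 1 + 2 = m + 3 from rfl, this, ih]
      ring
  -- doubling formulas
  have dbl : ∀ n : ℕ, f (2 * n + 1) = f (n + 1) ^ 2 + f n ^ 2 ∧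
      f (2 * n + 2) = f (n + 1) * (f (n + 2) + f n) := by
    intro n
    induction n with
    | zero => constructor <;> simp [hrec 0, h0, h1] <;> ring
    | succ m ih =>
      obtain ⟨ih1, ih2⟩ := ih
      have e2 := hrec m
      have ha1 : f (2 * (m + 1) + 1) = f (m + 2) ^ 2 + f (m + 1) ^ 2 := by
        have := hrec (2 * m + 1)
        rw [show 2 * m + 1 + 2 = 2 * (m + 1) + 1 from by ring] at this
        rw [this, show 2 * m + 1 + 1 = 2 * m + 2 from rfl, ih2, ih1, e2]
        ring
      refine ⟨ha1, ?_⟩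
      have e3 := hrec (m + 1)
      have := hrec (2 * m + 2)
      rw [show 2 * m + 2 + 2 = 2 * (m + 1) + 2 from by ring,
        show 2 * m + 2 + 1 = 2 * (m + 1) + 1 from by ring] at this
      rw [this, ha1, ih2, e3, e2]
      ring
  intro n hn
  obtain ⟨m, rfl⟩ := Nat.exists_eq_add_of_lt hn
  simp only [zero_add]
  have h1' : 2 * (m + 1) - 1 = 2 * m + 1 := by omega
  have h2' : 2 * (m + 1) + 1 = 2 * (m + 1) + 1 := rfl
  rw [h1']
  obtain ⟨d1, _⟩ := dbl m
  obtain ⟨d2, _⟩ := dbl (m + 1)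
  have e2 := hrec m
  have c := cassini m
  rw [d1, d2, show m + 1 + 1 = m + 2 from rfl, e2]
  have : (-1 : ℤ) ^ (m + 1) = f (m + 2) * f m - f (m + 1) ^ 2 := c.symm
  rw [this, e2]
  ring
end

section
/- For the generalized Fibonacci sequence, for every positive integer n one has a·(a_{2n−2} + a_{2n}) = (a² + 4)·(a_n² − a_{n−1}²) + 4·(−1)^n. -/
theorem genFib_shifted_trace (a : ℤ) (ha : 1 ≤ a) (f : ℕ → ℤ) (h0 : f 0 = 0) (h1 : f 1 = 1)
    (hrec : ∀ n, f (n + 2) = a * f (n + 1) + f n) :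
    ∀ n : ℕ, 0 < n →
      a * (f (2 * n - 2) + f (2 * n)) =
        (a ^ 2 + 4) * ((f n) ^ 2 - (f (n - 1)) ^ 2) + 4 * (-1) ^ n := by
  have cassini : ∀ m : ℕ, f (m+1)^2 - a * f m * f (m+1) - f m ^ 2 = (-1)^m := by
    intro m
    induction m with
    | zero => simp [h0, h1]
    | succ k ih =>
      rw [hrec k, pow_succ]
      ring_nf
      ring_nf at ih
      linarith
  have doubling : ∀ m : ℕ, f (2*m) = f m * (2 * f (m+1) - a * f m) ∧
      f (2*m+1) = f (m+1)^2 + f m ^2 := by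
    intro m
    induction m with
    | zero => simp [h0, h1]
    | succ k ih =>
      obtain ⟨ih1, ih2⟩ := ih
      have e1 : f (2*k+2) = a * f (2*k+1) + f (2*k) := hrec _
      have e2 : f (2*k+3) = a * f (2*k+2) + f (2*k+1) := hrec _
      have e3 : f (k+2) = a * f (k+1) + f k := hrec _
      constructor
      · show f (2*k+2) = _
        rw [e1, ih1, ih2, e3]; ring
      · show f (2*k+3) = _
        rw [e2, e1, ih1, ih2, e3]; ring
  intro n hn
  obtain ⟨m, rfl⟩ : ∃ m, n = m + 1 := ⟨n - 1, by omega⟩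
  have hi1 : 2 * (m+1) - 2 = 2*m := by omega
  have hi2 : 2 * (m+1) = 2*m + 2 := by omega
  rw [hi1, hi2, Nat.add_sub_cancel]
  have h2 : f (2*m+2) = a * f (2*m+1) + f (2*m) := hrec _
  have hd := doubling m
  have hc := cassini m
  rw [pow_succ]
  linear_combination a*h2 + 2*a*hd.1 + a^2*hd.2 - 4*hc
end

section
/- For the generalized Fibonacci sequence and every positive integer n, one has a_{n+1}² − a_n² − (−1)^n = a·a_n·a_{n+1}; in particular a divides a_{n+1}² − a_n² − (−1)^n and a_n divides this quantity divided by a. -/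
theorem genFib_sq_diff_succ (a : ℤ) (ha : 1 ≤ a) (f : ℕ → ℤ) (h0 : f 0 = 0) (h1 : f 1 = 1)
    (hrec : ∀ n, f (n + 2) = a * f (n + 1) + f n) :
    ∀ n : ℕ, 0 < n →
      (f (n + 1)) ^ 2 - (f n) ^ 2 - (-1) ^ n = a * f n * f (n + 1) ∧
      a ∣ ((f (n + 1)) ^ 2 - (f n) ^ 2 - (-1) ^ n) ∧
      f n ∣ ((f (n + 1)) ^ 2 - (f n) ^ 2 - (-1) ^ n) / a := by
  have key : ∀ n : ℕ, f (n + 1) ^ 2 - f n * f (n + 2) = (-1) ^ n := by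
    intro n
    induction n with
    | zero => simp [h0, h1]
    | succ k ih =>
      have h2 : f (k + 2) = a * f (k + 1) + f k := hrec k
      have h3 : f (k + 3) = a * f (k + 2) + f (k + 1) := hrec (k + 1)
      show f (k + 2) ^ 2 - f (k + 1) * f (k + 3) = (-1) ^ (k + 1)
      have hpow : ((-1 : ℤ)) ^ (k + 1) = -(-1) ^ k := by ring
      rw [hpow]
      linear_combination (-1 : ℤ) * ih - f (k + 1) * h3 + f (k + 2) * h2
  have main : ∀ n : ℕ, f (n + 1) ^ 2 - f n ^ 2 - (-1) ^ n = a * f n * f (n + 1) := by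
    intro n
    have k := key n
    have h2 : f (n + 2) = a * f (n + 1) + f n := hrec n
    rw [h2] at k
    linear_combination k
  intro n _
  have hm := main n
  have ha0 : a ≠ 0 := by linarith
  refine ⟨hm, ?_, ?_⟩
  · rw [hm]; exact ⟨f n * f (n + 1), by ring⟩
  · rw [hm, mul_assoc, Int.mul_ediv_cancel_left _ ha0]
    exact Dvd.intro _ rfl
end

section
/- For the generalized Fibonacci sequence and every positive integer n, one has a_n² − a_{n−1}² + (−1)^n = a·a_n·a_{n−1}. -/
theorem genFib_sq_diff_pred (a : ℤ) (ha : 1 ≤ a) (f : ℕ → ℤ) (h0 : f 0 = 0) (h1 : f 1 = 1)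
    (hrec : ∀ n, f (n + 2) = a * f (n + 1) + f n) :
    ∀ n : ℕ, 0 < n →
      (f n) ^ 2 - (f (n - 1)) ^ 2 + (-1) ^ n = a * f n * f (n - 1) := by
  have key : ∀ n : ℕ, (f (n+1)) ^ 2 - (f n) ^ 2 + (-1) ^ (n+1) = a * f (n+1) * f n := by
    intro n
    induction n with
    | zero => simp [h0, h1]
    | succ m ih =>
      rw [hrec m]
      ring_nf
      ring_nf at ih
      linarith [ih]
  intro n hn
  obtain ⟨m, rfl⟩ := Nat.exists_eq_add_of_lt hn
  simpa using key m
end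

section
/- For positive integers k < q, if a_k divides a_q, then a_k divides a_{q−k}. -/
theorem genFib_dvd_sub (a : ℤ) (ha : 1 ≤ a) (f : ℕ → ℤ) (h0 : f 0 = 0) (h1 : f 1 = 1)
    (hrec : ∀ n, f (n + 2) = a * f (n + 1) + f n) :
    ∀ k q : ℕ, 0 < k → k < q → f k ∣ f q → f k ∣ f (q - k) := by
  have key : ∀ n m, f (m + n + 1) = f (m + 1) * f (n + 1) + f m * f n := by
    intro n
    induction n using Nat.twoStepInduction with
    | zero => intro m; simp [h0, h1]
    | one =>
      intro m
      have h2 : f 2 = a := by rw [hrec 0, h0, h1]; ring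
      rw [show m + 1 + 1 = m + 2 from rfl, hrec m, h1, h2]; ring
    | more n ih1 ih2 =>
      intro m
      have e1 : m + (n + 2) + 1 = (m + n + 1) + 2 := by ring
      have e2 : m + (n + 1) + 1 = (m + n + 1) + 1 := by ring
      rw [e1, hrec, ← e2, ih2 m, ih1 m, show n + 1 + 1 = n + 2 from rfl, show n + 2 + 1 = n + 1 + 2 from rfl, hrec (n + 1), hrec n]
      ring
  have cop : ∀ n, IsCoprime (f (n + 1)) (f n) := by
    intro n
    induction n with
    | zero => rw [h0, h1]; exact isCoprime_one_left
    | succ n ih =>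
      rw [hrec n, add_comm]
      exact ih.symm.add_mul_right_left a
  intro k q hk hkq hdvd
  obtain ⟨k', rfl⟩ : ∃ k', k = k' + 1 := ⟨k - 1, (Nat.succ_pred_eq_of_pos hk).symm⟩
  set m := q - (k' + 1) with hm
  have hq : q = m + k' + 1 := by omega
  rw [hq, key k' m] at hdvd
  have : f (k' + 1) ∣ f m * f k' := (dvd_add_right (dvd_mul_left _ _)).mp hdvd
  exact (cop k').dvd_of_dvd_mul_right this
end

section
/- For every positive integer k, the matrix (AB)^k equals [[a_{2k−1}, a_{2k}],[a_{2k}, a_{2k+1}]], where A = [[1,0],[a,−1]] and B = [[1,a],[0,−1]]. -/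
/-!
With `Q = [[0,1],[1,a]]` the companion matrix of the recurrence, `Q ^ (n+1)` has entries
`a_n, a_{n+1}, a_{n+1}, a_{n+2}`, and `AB = Q ^ 2`; hence `(AB) ^ k = Q ^ (2k)`.
-/

section GenFib

variable {R : Type*} [CommRing R] (a : R)

theorem mul_eq_companion_sq :
    (!![1, 0; a, -1] * !![1, a; 0, -1] : Matrix (Fin 2) (Fin 2) R) = !![0, 1; 1, a] ^ 2 := by
  rw [sq, Matrix.mul_fin_two, Matrix.mul_fin_two]
  simp [add_comm]

theorem companion_pow_succ {f : ℕ → R} (h0 : f 0 = 0) (h1 : f 1 = 1)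
    (hrec : ∀ n, f (n + 2) = a * f (n + 1) + f n) (n : ℕ) :
    (!![0, 1; 1, a] : Matrix (Fin 2) (Fin 2) R) ^ (n + 1) =
      !![f n, f (n + 1); f (n + 1), f (n + 2)] := by
  induction n with
  | zero => simp [h0, h1, hrec 0]
  | succ n ih =>
    rw [pow_succ, ih, Matrix.mul_fin_two, hrec (n + 1), hrec n]
    ext i j
    fin_cases i <;> fin_cases j <;> simp <;> ring

end GenFib

theorem genFib_matrix_pow_general (a : ℤ) (f : ℕ → ℤ) (h0 : f 0 = 0) (h1 : f 1 = 1)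
    (hrec : ∀ n, f (n + 2) = a * f (n + 1) + f n) :
    ∀ k : ℕ, 0 < k →
      (!![1, 0; a, -1] * !![1, a; 0, -1] : Matrix (Fin 2) (Fin 2) ℤ) ^ k =
        !![f (2 * k - 1), f (2 * k); f (2 * k), f (2 * k + 1)] := by
  rintro k hk
  obtain ⟨m, rfl⟩ : ∃ m, k = m + 1 := ⟨k - 1, by omega⟩
  rw [mul_eq_companion_sq, ← pow_mul, show 2 * (m + 1) = (2 * m + 1) + 1 by ring,
    companion_pow_succ a h0 h1 hrec]
  rfl

theorem genFib_matrix_pow (a : ℤ) (ha : 1 ≤ a) (f : ℕ → ℤ) (h0 : f 0 = 0) (h1 : f 1 = 1)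
    (hrec : ∀ n, f (n + 2) = a * f (n + 1) + f n) :
    ∀ k : ℕ, 0 < k →
      (!![1, 0; a, -1] * !![1, a; 0, -1] : Matrix (Fin 2) (Fin 2) ℤ) ^ k =
        !![f (2 * k - 1), f (2 * k); f (2 * k), f (2 * k + 1)] :=
  genFib_matrix_pow_general a f h0 h1 hrec
end

section
/- If k is an even positive integer, then (a² + 4)·a_k² + 4 is a perfect square. -/
theorem genFib_even_square (a : ℤ) (ha : 1 ≤ a) (f : ℕ → ℤ) (h0 : f 0 = 0) (h1 : f 1 = 1)
    (hrec : ∀ n, f (n + 2) = a * f (n + 1) + f n) :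
    ∀ k : ℕ, 0 < k → Even k → IsSquare ((a ^ 2 + 4) * (f k) ^ 2 + 4) := by
  have hg : ∀ n : ℕ, f (n + 1) ^ 2 - a * f (n + 1) * f n - f n ^ 2 = (-1 : ℤ) ^ n := by
    intro n
    induction n with
    | zero => simp [h0, h1]
    | succ m ih =>
      have h := hrec m
      rw [show m+1+1 = m+2 from rfl, h]
      linear_combination (-1 : ℤ) * ih
  intro k _ hk
  refine ⟨2 * f (k + 1) - a * f k, ?_⟩
  have h := hg k
  rw [hk.neg_one_pow] at h
  nlinarith [h]
end

section
/- If k is an odd positive integer, then (a² + 4)·a_k² − 4 is a perfect square. -/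
theorem genFib_odd_square (a : ℤ) (ha : 1 ≤ a) (f : ℕ → ℤ) (h0 : f 0 = 0) (h1 : f 1 = 1)
    (hrec : ∀ n, f (n + 2) = a * f (n + 1) + f n) :
    ∀ k : ℕ, 0 < k → Odd k → IsSquare ((a ^ 2 + 4) * (f k) ^ 2 - 4) := by
  have cassini : ∀ n : ℕ, f (n + 2) * f n - f (n + 1) ^ 2 = (-1) ^ (n + 1) := by
    intro n
    induction n with
    | zero => simp [hrec 0, h0, h1]
    | succ m ih =>
      have h2 := hrec (m + 1)
      have h3 := hrec m
      rw [pow_succ]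
      linear_combination f (m + 1) * h2 - f (m + 2) * h3 - ih
  rintro k - ⟨m, hm⟩
  subst hm
  refine ⟨a * f (2 * m + 1) + 2 * f (2 * m), ?_⟩
  have hc := cassini (2 * m)
  have h2 : f (2 * m + 2) = a * f (2 * m + 1) + f (2 * m) := hrec (2 * m)
  have hneg : ((-1 : ℤ)) ^ (2 * m + 1) = -1 := by
    rw [pow_succ, pow_mul]; norm_num
  rw [hneg] at hc
  linear_combination (-4) * hc + 4 * f (2 * m) * h2
end

section
/- A positive integer n satisfies that (a² + 4)·n² + 4 is a perfect square if and only if n = a_k for some even nonnegative integer k. -/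
set_option maxHeartbeats 1600000 in
theorem genFib_criterion_even (a : ℤ) (ha : 1 ≤ a) (f : ℕ → ℤ) (h0 : f 0 = 0) (h1 : f 1 = 1)
    (hrec : ∀ n, f (n + 2) = a * f (n + 1) + f n) :
    ∀ n : ℤ, 0 < n →
      (IsSquare ((a ^ 2 + 4) * n ^ 2 + 4) ↔ ∃ k : ℕ, Even k ∧ n = f k) := by
  have cassini : ∀ k, f (k+1)^2 - a * f (k+1) * f k - (f k)^2 = (-1:ℤ)^k := by
    intro k
    induction k with
    | zero => simp [h0, h1]
    | succ k ih =>
      linear_combination (f (k+2) + f k) * hrec k - ih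
  have key : ∀ m : ℕ, ∀ x : ℤ, 0 < x → x^2 = (a^2+4) * (m:ℤ)^2 + 4 →
      ∃ k : ℕ, (m:ℤ) = f (2*k) ∧ x = 2 * f (2*k+1) - a * f (2*k) := by
    intro m
    induction m using Nat.strong_induction_on with
    | _ m ih =>
      intro x hx hx2
      rcases Nat.eq_zero_or_pos m with rfl | hm
      · have h4 : (x - 2) * (x + 2) = 0 := by push_cast at hx2; linear_combination hx2
        have hx2' : x = 2 := by
          rcases mul_eq_zero.mp h4 with h | h
          · linarith
          · linarith
        exact ⟨0, by simp [h0], by simp [hx2', h0, h1]⟩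
      · have hm1 : (1:ℤ) ≤ (m:ℤ) := by exact_mod_cast hm
        set y : ℤ := (m:ℤ) with hy
        have hev : Even ((x - a*y) * (x + a*y)) := ⟨2*(y^2+1), by linear_combination hx2⟩
        have hev2 : Even (x - a*y) := by
          rcases Int.even_mul.mp hev with h | h
          · exact h
          · have h2 := h.sub (even_two_mul (a*y))
            have he : x + a*y - 2*(a*y) = x - a*y := by ring
            rwa [he] at h2
        obtain ⟨t, ht⟩ := hev2
        have hxt : x = a*y + 2*t := by linarith
        have hay : a*y < x := by
          by_contra h
          push_neg at h
          have h2 : x*x ≤ (a*y)*(a*y) :=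
            mul_le_mul h h (le_of_lt hx) (le_trans (le_of_lt hx) h)
          nlinarith [hx2]
        have ht0 : 0 < t := by linarith
        have ht1 : 1 ≤ t := ht0
        -- case y < a is impossible
        have hma : a ≤ y := by
          by_contra hlt
          push_neg at hlt
          have h3 : x < a*y + 2 := by
            by_contra h
            push_neg at h
            have h2 : (a*y+2)*(a*y+2) ≤ x*x :=
              mul_le_mul h h (by nlinarith) (le_of_lt hx)
            nlinarith [hx2]
          have hxe : x = a*y + 1 := by
            have := hay
            omega
          have hpar : 2*(a*y) = 4*y^2 + 3 := by nlinarith [hx2]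
          obtain ⟨p, hp⟩ : ∃ p : ℤ, p = a*y := ⟨_, rfl⟩
          obtain ⟨q, hq⟩ : ∃ q : ℤ, q = y^2 := ⟨_, rfl⟩
          rw [← hp, ← hq] at hpar
          omega
        -- descent
        set x' : ℤ := (a^2+2)*t - a*y with hx'
        set y' : ℤ := y - a*t with hy'
        have hx2' : (a*y + 2*t)^2 = (a^2+4)*y^2 + 4 := by rw [← hxt]; exact hx2
        have hsol : x'^2 = (a^2+4) * y'^2 + 4 := by
          rw [hx', hy']; linear_combination hx2'
        have hid1 : (a*x)^2 = ((a^2+2)*y)^2 - 4*y^2 + 4*a^2 := by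
          linear_combination a^2 * hx2
        have hy'nn : 0 ≤ y' := by
          rw [hy']
          by_contra h
          push_neg at h
          have h5 : a*t ≥ y + 1 := by linarith
          have h6 : (a^2+2)*y < a*x := by
            have : a*x = a*(a*y) + 2*(a*t) := by rw [hxt]; ring
            nlinarith
          have h7 : ((a^2+2)*y)*((a^2+2)*y) < (a*x)*(a*x) :=
            mul_lt_mul'' h6 h6 (mul_nonneg (by positivity) (by linarith)) (mul_nonneg (by positivity) (by linarith))
          have hyy : a*a ≤ y*y := mul_le_mul hma hma (by linarith) (by linarith)
          nlinarith [hid1, h7, hyy]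
        have hy'lt : y' < y := by
          rw [hy']
          have hat : 0 < a*t := mul_pos (by linarith) ht0
          linarith
        have hid2 : ((a^2+2)*x)^2 = ((a^2+4)*a*y)^2 + 4*(a^2+4)*y^2 + 4*(a^2+2)^2 := by
          linear_combination (a^2+2)^2 * hx2
        have hx'pos : 0 < x' := by
          by_contra h
          push_neg at h
          have h5 : (a^2+2)*x ≤ (a^2+4)*a*y := by
            have h6 : (a^2+2)*x - (a^2+4)*a*y = 2*x' := by
              rw [hx', hxt]; ring
            linarith
          have h7 : ((a^2+2)*x)*((a^2+2)*x) ≤ ((a^2+4)*a*y)*((a^2+4)*a*y) :=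
            mul_le_mul h5 h5 (mul_nonneg (by positivity) hx.le) (mul_nonneg (mul_nonneg (by positivity) (by linarith)) (by linarith))
          have hp1 : (0:ℤ) < (a^2+2)^2 := by positivity
          have hq1 : (0:ℤ) ≤ (a^2+4)*y^2 := by positivity
          linarith [hid2, h7, hp1, hq1]
        have hcast : ((y'.toNat : ℤ)) = y' := Int.toNat_of_nonneg hy'nn
        have hm'lt : y'.toNat < m := by omega
        obtain ⟨k, hk1, hk2⟩ := ih y'.toNat hm'lt x' hx'pos (by rw [hcast]; exact hsol)
        have hy'f : y' = f (2*k) := by rw [← hcast]; exact hk1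
        have h2t : 2*t = x' + a*y' := by rw [hx', hy']; ring
        have htf : t = f (2*k+1) := by
          rw [hk2, hy'f] at h2t
          linarith
        have h5 : y - a * f (2*k+1) = f (2*k) := by
          rw [← htf, ← hy'f, hy']
        refine ⟨k+1, ?_, ?_⟩
        · have e1 : f (2*(k+1)) = a * f (2*k+1) + f (2*k) := by
            rw [show 2*(k+1) = 2*k+2 by ring]; exact hrec (2*k)
          rw [e1]; linarith
        · have e1 : f (2*(k+1)) = a * f (2*k+1) + f (2*k) := by
            rw [show 2*(k+1) = 2*k+2 by ring]; exact hrec (2*k)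
          have e2 : f (2*(k+1)+1) = a * f (2*(k+1)) + f (2*k+1) := by
            rw [show 2*(k+1)+1 = (2*k+1)+2 by ring, hrec (2*k+1),
              show 2*k+1+1 = 2*(k+1) by ring]
          rw [e2, e1, hxt, htf]
          linear_combination a * h5
  intro n hn
  constructor
  · rintro ⟨r, hr⟩
    have hxpos : 0 < |r| := by
      rcases eq_or_ne r 0 with rfl | h
      · exfalso
        have h0' : (0:ℤ) ≤ (a^2+4)*n^2 := by positivity
        nlinarith [h0']
      · exact abs_pos.mpr h
    have hxsq : |r|^2 = (a^2+4) * ((n.toNat : ℤ))^2 + 4 := by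
      rw [sq_abs, Int.toNat_of_nonneg (le_of_lt hn)]
      linear_combination -hr
    obtain ⟨k, hk1, _⟩ := key n.toNat |r| hxpos hxsq
    refine ⟨2*k, even_two_mul k, ?_⟩
    rw [← hk1, Int.toNat_of_nonneg (le_of_lt hn)]
  · rintro ⟨k, hke, rfl⟩
    have hc : f (k+1)^2 - a * f (k+1) * f k - (f k)^2 = 1 := by
      rw [cassini k, hke.neg_one_pow]
    exact ⟨2 * f (k+1) - a * f k, by linear_combination (-4) * hc⟩
end

section
/- A positive integer n satisfies that (a² + 4)·n² − 4 is a perfect square if and only if n = a_k for some odd positive integer k. -/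
theorem genFib_criterion_odd (a : ℤ) (ha : 1 ≤ a) (f : ℕ → ℤ) (h0 : f 0 = 0) (h1 : f 1 = 1)
    (hrec : ∀ n, f (n + 2) = a * f (n + 1) + f n) :
    ∀ n : ℤ, 0 < n →
      (IsSquare ((a ^ 2 + 4) * n ^ 2 - 4) ↔ ∃ k : ℕ, Odd k ∧ 0 < k ∧ n = f k) := by
  set L : ℕ → ℤ := fun k => 2 * f (k+1) - a * f k with hLdef
  have hf2 : f 2 = a := by have := hrec 0; rw [h0, h1] at this; linarith
  have hLrec : ∀ k, L (k+2) = a * L (k+1) + L k := by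
    intro k
    simp only [hLdef]
    rw [hrec (k+1), hrec k]
    ring
  have hQM : ∀ k, ((L k)^2 - (a^2+4) * (f k)^2 = 4 * (-1)^k
      ∧ (L (k+1))^2 - (a^2+4) * (f (k+1))^2 = -(4 * (-1)^k)
      ∧ L k * L (k+1) - (a^2+4) * (f k * f (k+1)) = 2*a*(-1)^k) := by
    intro k
    induction k with
    | zero =>
      simp only [hLdef, h0, h1, hf2]
      refine ⟨by ring, by ring, by ring⟩
    | succ k ih =>
      refine ⟨?_, ?_, ?_⟩
      · rw [pow_succ]
        linear_combination ih.2.1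
      · rw [hLrec k, hrec k, pow_succ]
        linear_combination a^2 * ih.2.1 + 2*a*ih.2.2 + ih.1
      · rw [hLrec k, hrec k, pow_succ]
        linear_combination a * ih.2.1 + ih.2.2
  -- descent lemma
  have key : ∀ N : ℕ, ∀ n x : ℤ, 0 < n → n ≤ (N : ℤ) → 0 ≤ x →
      x^2 = (a^2+4)*n^2 - 4 → ∃ k : ℕ, Odd k ∧ n = f k ∧ x = L k := by
    intro N
    induction N with
    | zero => intro n x hn hnN _ _; exfalso; push_cast at hnN; linarith
    | succ N ih =>
      intro n x hn hnN hx hsq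
      by_cases h1n : n = 1
      · subst h1n
        have hxa : (x - a) * (x + a) = 0 := by linear_combination hsq
        have hx_eq : x = a := by
          rcases mul_eq_zero.mp hxa with h | h
          · linarith
          · linarith
        refine ⟨1, ⟨0, by norm_num⟩, by rw [h1], ?_⟩
        simp only [hLdef, hf2, h1]
        linarith
      · have hn2 : 2 ≤ n := by omega
        have heven : Even (x - a*n) := by
          have h2 : Even ((x - a*n)*(x + a*n)) := by
            have : (x - a*n)*(x + a*n) = (2*n^2 - 2) + (2*n^2 - 2) := by
              linear_combination hsq
            rw [this]; exact ⟨2*n^2 - 2, rfl⟩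
          rcases Int.even_mul.mp h2 with h | h
          · exact h
          · have he : x - a*n = (x + a*n) - (a*n + a*n) := by ring
            rw [he]; exact h.sub ⟨a*n, rfl⟩
        obtain ⟨c, hc⟩ := heven
        have hxan : x = a*n + 2*c := by linarith
        -- c > 0
        have han : 2 ≤ a * n := by nlinarith
        have hxan_pos : 0 < x + a*n := by linarith
        have hprod_pos : 0 < (x - a*n) * (x + a*n) := by nlinarith
        have hc_pos : 0 < c := by
          nlinarith [mul_pos hprod_pos hxan_pos]
        set y' : ℤ := n - a*c with hy'def
        set x' : ℤ := (a^2+2)*c - a*n with hx'def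
        have hy'pos : 0 < y' := by
          nlinarith [sq_nonneg ((a^2+2)*n - a*x), mul_nonneg (mul_nonneg (by linarith : (0:ℤ) ≤ a) hx) (by linarith : (0:ℤ) ≤ n)]
        have hy'n : y' < n := by nlinarith
        have hx'sq : x'^2 = (a^2+4)*y'^2 - 4 := by
          simp only [hx'def, hy'def]
          linear_combination hsq - (x + a*n + 2*c) * hxan
        have hx'pos : 0 < x' := by
          by_contra h
          push_neg at h
          nlinarith [mul_nonneg (neg_nonneg.2 h) (by nlinarith : (0:ℤ) ≤ a*y' + x'), hx'sq]
        have hy'N : y' ≤ (N : ℤ) := by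
          push_cast at hnN; omega
        obtain ⟨j, hj, hjf, hjL⟩ := ih y' x' hy'pos hy'N (le_of_lt hx'pos) hx'sq
        have hLj : L j = 2 * f (j+1) - a * f j := rfl
        have hjL' : (a^2+2)*c - a*n = 2 * f (j+1) - a * f j := by rw [← hLj, ← hx'def, hjL]
        have hjf' : n - a*c = f j := by rw [← hy'def, hjf]
        have hnf : n = f (j + 2) := by
          have h2n : 2 * n = 2 * f (j + 2) := by
            rw [hrec j]
            linear_combination (a^2+2) * hjf' + a * hjL'
          linarith
        have hxL : x = L (j + 2) := by
          have h2x : 2 * x = 2 * L (j + 2) := by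
            rw [hLrec j, hLj]
            have hLj1 : L (j+1) = 2 * f (j+2) - a * f (j+1) := rfl
            rw [hLj1, hrec j]
            linear_combination 2 * hxan + (a^3 + 4*a) * hjf' + (a^2 + 2) * hjL'
          linarith
        exact ⟨j + 2, by obtain ⟨t, ht⟩ := hj; exact ⟨t + 1, by omega⟩, hnf, hxL⟩
  intro n hn
  constructor
  · rintro ⟨r, hr⟩
    obtain ⟨k, hk, hkf, -⟩ := key n.toNat n |r| hn (by omega) (abs_nonneg r)
      (by rw [sq_abs]; linear_combination -hr)
    exact ⟨k, hk, by obtain ⟨t, ht⟩ := hk; omega, hkf⟩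
  · rintro ⟨k, hk, hk0, rfl⟩
    have hq := (hQM k).1
    rw [hk.neg_one_pow] at hq
    exact ⟨L k, by linarith⟩
end

section
/- A positive integer n is a Fibonacci number if and only if 5n² + 4 or 5n² − 4 is a perfect square; moreover 5n² + 4 is a square exactly when n = f_k for some even k, and 5n² − 4 is a square exactly when n = f_k for some odd k. -/
private lemma cassini (k : ℕ) :
    ((Nat.fib (k+1) : ℤ))^2 - (Nat.fib (k+1)) * (Nat.fib k) - (Nat.fib k)^2 = (-1)^k := by
  induction k with
  | zero => simp
  | succ n ih =>
    rw [Nat.fib_add_two]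
    push_cast
    push_cast at ih
    linear_combination (-1 : ℤ) * ih

private lemma lucas_id (k : ℕ) :
    (2*(Nat.fib (k+1):ℤ) - Nat.fib k)^2 - 5*(Nat.fib k:ℤ)^2 = 4*(-1)^k := by
  linear_combination 4 * cassini k

private lemma fib3 : Nat.fib 3 = 2 := rfl
private lemma fib2 : Nat.fib 2 = 1 := rfl
private lemma fib1 : Nat.fib 1 = 1 := rfl
private lemma fib0 : Nat.fib 0 = 0 := rfl

private lemma desc : ∀ y : ℕ, ∀ x : ℕ,
    ((x:ℤ)^2 - 5*(y:ℤ)^2 = 4 →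
      ∃ k, Even k ∧ (x:ℤ) = 2*(Nat.fib (k+1):ℤ) - Nat.fib k ∧ y = Nat.fib k) ∧
    ((x:ℤ)^2 - 5*(y:ℤ)^2 = -4 →
      ∃ k, Odd k ∧ (x:ℤ) = 2*(Nat.fib (k+1):ℤ) - Nat.fib k ∧ y = Nat.fib k) := by
  intro y
  induction y using Nat.strong_induction_on with
  | _ y IH =>
  intro x
  by_cases h0 : y = 0
  · subst h0
    constructor
    · intro hx
      have hx' : (x:ℤ)^2 = 4 := by push_cast at hx ⊢; linarith
      have hxn : x^2 = 4 := by exact_mod_cast hx'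
      have hx2 : x = 2 := by nlinarith
      exact ⟨0, Even.zero, by norm_num [hx2, fib1, fib0], by simp [fib0]⟩
    · intro hx
      exfalso
      have : (0:ℤ) ≤ (x:ℤ)^2 := sq_nonneg _
      push_cast at hx
      nlinarith
  by_cases h1 : y = 1
  · subst h1
    constructor
    · intro hx
      have hx' : (x:ℤ)^2 = 9 := by push_cast at hx ⊢; linarith
      have hxn : x^2 = 9 := by exact_mod_cast hx'
      have hx3 : x = 3 := by nlinarith
      exact ⟨2, even_two, by norm_num [hx3, fib3, fib2], by simp [fib2]⟩
    · intro hx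
      have hx' : (x:ℤ)^2 = 1 := by push_cast at hx ⊢; linarith
      have hxn : x^2 = 1 := by exact_mod_cast hx'
      have hx1 : x = 1 := by nlinarith
      exact ⟨1, odd_one, by norm_num [hx1, fib2, fib1], by simp [fib1]⟩
  have hy2 : 2 ≤ y := by omega
  have main : ∀ s : ℤ, (s = 1 ∨ s = -1) → (x:ℤ)^2 - 5*(y:ℤ)^2 = 4*s →
      ∃ k, (x:ℤ) = 2*(Nat.fib (k+1):ℤ) - Nat.fib k ∧ y = Nat.fib k ∧
        ((s = 1 → Even k) ∧ (s = -1 → Odd k)) := by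
    intro s hs hx
    have hxn : (x:ℤ)^2 = 5*(y:ℤ)^2 + 4*s := by linarith
    have hyz : (2:ℤ) ≤ (y:ℤ) := by exact_mod_cast hy2
    have hs1 : -1 ≤ s := by rcases hs with h | h <;> simp [h]
    have hs2 : s ≤ 1 := by rcases hs with h | h <;> simp [h]
    -- bounds
    have hxy : (y:ℤ) < (x:ℤ) := by nlinarith [sq_nonneg ((x:ℤ) + y)]
    have hx3y : (x:ℤ) < 3*(y:ℤ) := by nlinarith [sq_nonneg ((x:ℤ) + 3*y)]
    have hxyn : y < x := by exact_mod_cast hxy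
    have hx3yn : x < 3*y := by exact_mod_cast hx3y
    have hx5y : x ≤ 5*y := by
      have : (x:ℤ) ≤ 5*(y:ℤ) := by nlinarith [sq_nonneg ((x:ℤ) + 5*y)]
      exact_mod_cast this
    -- parity
    have h2 : Even ((x:ℤ)^2 - (y:ℤ)^2) := ⟨2*(y:ℤ)^2 + 2*s, by linarith⟩
    have hpe : Even ((x:ℤ) - (y:ℤ)) := by
      rw [Int.even_sub] at h2 ⊢
      simpa [Int.even_pow] using h2
    obtain ⟨c, hc⟩ := hpe
    obtain ⟨y', hy'⟩ : ∃ y', x = y + 2*y' := ⟨(x - y)/2, by omega⟩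
    obtain ⟨x', hx'⟩ : ∃ x', 5*y = x + 2*x' := ⟨(5*y - x)/2, by omega⟩
    have hy'lt : y' < y := by omega
    have e1 : 2*(y':ℤ) = (x:ℤ) - (y:ℤ) := by omega
    have e2 : 2*(x':ℤ) = 5*(y:ℤ) - (x:ℤ) := by omega
    have h4 : 4*(x':ℤ)^2 - 20*(y':ℤ)^2 = -16*s := by
      linear_combination (2*(x':ℤ) + 5*(y:ℤ) - x) * e2 - 5*(2*(y':ℤ) + (x:ℤ) - y) * e1 - 4*hx
    have step : ∀ k : ℕ, (x':ℤ) = 2*(Nat.fib (k+1):ℤ) - Nat.fib k → y' = Nat.fib k →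
        (x:ℤ) = 2*(Nat.fib ((k+1)+1):ℤ) - Nat.fib (k+1) ∧ y = Nat.fib (k+1) := by
      intro k hxk hyk
      have hykz : (y':ℤ) = (Nat.fib k : ℤ) := by exact_mod_cast hyk
      have h2y : 2*(y:ℤ) = (x':ℤ) + (y':ℤ) := by omega
      have hyI : (y:ℤ) = (Nat.fib (k+1) : ℤ) := by linarith
      have hxI : (x:ℤ) = (y:ℤ) + 2*(y':ℤ) := by omega
      constructor
      · have hf : (Nat.fib (k+2) : ℤ) = (Nat.fib k : ℤ) + (Nat.fib (k+1) : ℤ) := by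
          rw [Nat.fib_add_two]; push_cast; ring
        rw [show (k+1)+1 = k+2 from rfl, hf, hxI, hyI, hykz]
        ring
      · exact_mod_cast hyI
    rcases hs with h | h
    · subst h
      have hx'eq : (x':ℤ)^2 - 5*(y':ℤ)^2 = -4 := by linarith
      obtain ⟨k, hk, hxk, hyk⟩ := (IH y' hy'lt x').2 hx'eq
      obtain ⟨g1, g2⟩ := step k hxk hyk
      exact ⟨k+1, g1, g2, fun _ => hk.add_one, fun h => by norm_num at h⟩
    · subst h
      have hx'eq : (x':ℤ)^2 - 5*(y':ℤ)^2 = 4 := by linarith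
      obtain ⟨k, hk, hxk, hyk⟩ := (IH y' hy'lt x').1 hx'eq
      obtain ⟨g1, g2⟩ := step k hxk hyk
      exact ⟨k+1, g1, g2, fun h => by norm_num at h, fun _ => hk.add_one⟩
  constructor
  · intro hx
    obtain ⟨k, h1', h2', h3', _⟩ := main 1 (Or.inl rfl) (by linarith)
    exact ⟨k, h3' rfl, h1', h2'⟩
  · intro hx
    obtain ⟨k, h1', h2', _, h3'⟩ := main (-1) (Or.inr rfl) (by linarith)
    exact ⟨k, h3' rfl, h1', h2'⟩

private lemma sq_of_even (n k : ℕ) (hk : Even k) (hn : n = Nat.fib k) :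
    IsSquare (5 * (n : ℤ) ^ 2 + 4) := by
  refine ⟨2*(Nat.fib (k+1):ℤ) - Nat.fib k, ?_⟩
  have h := lucas_id k
  rw [hk.neg_one_pow] at h
  subst hn
  nlinarith [h]

private lemma sq_of_odd (n k : ℕ) (hk : Odd k) (hn : n = Nat.fib k) :
    IsSquare (5 * (n : ℤ) ^ 2 - 4) := by
  refine ⟨2*(Nat.fib (k+1):ℤ) - Nat.fib k, ?_⟩
  have h := lucas_id k
  rw [hk.neg_one_pow] at h
  subst hn
  nlinarith [h]

private lemma even_of_sq (n : ℕ) (h : IsSquare (5 * (n : ℤ) ^ 2 + 4)) :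
    ∃ k : ℕ, Even k ∧ n = Nat.fib k := by
  obtain ⟨r, hr⟩ := h
  have hx : ((r.natAbs : ℤ))^2 - 5*(n:ℤ)^2 = 4 := by
    have h2 : ((r.natAbs : ℤ))^2 = r * r := by
      rw [sq]; exact_mod_cast Int.natAbs_mul_self' r
    rw [h2, ← hr]; ring
  obtain ⟨k, hk, _, hn⟩ := (desc n r.natAbs).1 hx
  exact ⟨k, hk, hn⟩

private lemma odd_of_sq (n : ℕ) (h : IsSquare (5 * (n : ℤ) ^ 2 - 4)) :
    ∃ k : ℕ, Odd k ∧ n = Nat.fib k := by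
  obtain ⟨r, hr⟩ := h
  have hx : ((r.natAbs : ℤ))^2 - 5*(n:ℤ)^2 = -4 := by
    have h2 : ((r.natAbs : ℤ))^2 = r * r := by
      rw [sq]; exact_mod_cast Int.natAbs_mul_self' r
    rw [h2, ← hr]; ring
  obtain ⟨k, hk, _, hn⟩ := (desc n r.natAbs).2 hx
  exact ⟨k, hk, hn⟩

theorem whitney_criterion :
    ∀ n : ℕ, 0 < n →
      (((∃ k : ℕ, n = Nat.fib k) ↔
          (IsSquare (5 * (n : ℤ) ^ 2 + 4) ∨ IsSquare (5 * (n : ℤ) ^ 2 - 4))) ∧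
        (IsSquare (5 * (n : ℤ) ^ 2 + 4) ↔ ∃ k : ℕ, Even k ∧ n = Nat.fib k) ∧
        (IsSquare (5 * (n : ℤ) ^ 2 - 4) ↔ ∃ k : ℕ, Odd k ∧ n = Nat.fib k)) := by
  intro n _
  refine ⟨⟨?_, ?_⟩, ⟨even_of_sq n, ?_⟩, ⟨odd_of_sq n, ?_⟩⟩
  · rintro ⟨k, hk⟩
    rcases Nat.even_or_odd k with h | h
    · exact Or.inl (sq_of_even n k h hk)
    · exact Or.inr (sq_of_odd n k h hk)
  · rintro (h | h)
    · obtain ⟨k, _, hk⟩ := even_of_sq n h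
      exact ⟨k, hk⟩
    · obtain ⟨k, _, hk⟩ := odd_of_sq n h
      exact ⟨k, hk⟩
  · rintro ⟨k, hk, hn⟩
    exact sq_of_even n k hk hn
  · rintro ⟨k, hk, hn⟩
    exact sq_of_odd n k hk hn
end

section
/- For a ≥ 1 and m ≥ 1, let Q be the 2×2 matrix m·[[2,a],[a,−2]], and let M = [[a_{2n−1}, a_{2n}],[a_{2n}, a_{2n+1}]] where n is a positive integer. Then (M − I)·Q^{−1} has all entries in ℤ if and only if n is even and m divides a_n. -/
/-!
With `A = !![0, 1; 1, a]` one has `A ^ (k + 1) = !![f k, f (k + 1); f (k + 1), f (k + 2)]`, so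
`M = B * B` for `B = A ^ n`, and `det B = (-1) ^ n` is Cassini's identity. Since
`P = !![2, a; a, -2]` satisfies `P * P = (a ^ 2 + 4) • 1`, the matrix `(M - 1) * Q⁻¹` is
`(m * (a ^ 2 + 4))⁻¹ • ((B * B - 1) * P)`, and with `x = f (n - 1)`, `y = f n`,
`(B * B - 1) * P = ((a ^ 2 + 4) * y) • !![y, -x; f (n + 1), -y] + ((-1) ^ n - 1) • P`.
For odd `n` the top left entry is `(a ^ 2 + 4) * y ^ 2 - 4`, which `a ^ 2 + 4 ≥ 5` does not divide.
For even `n` integrality means `m ∣ y * x` and `m ∣ y * y` (and the other entries follow), i.e.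
`m ∣ y`, because `x` and `y` are coprime by Cassini's identity.
-/

open Matrix

section Recurrence

variable {R : Type*} [CommSemiring R] {a : R} {f : ℕ → R}

theorem pow_succ_eq_of_recurrence (h0 : f 0 = 0) (h1 : f 1 = 1)
    (hrec : ∀ n, f (n + 2) = a * f (n + 1) + f n) (k : ℕ) :
    !![0, 1; 1, a] ^ (k + 1) = !![f k, f (k + 1); f (k + 1), f (k + 2)] := by
  induction k with
  | zero => simp [h0, h1, hrec 0]
  | succ k ih =>
    rw [pow_succ, ih]
    ext i j
    fin_cases i <;> fin_cases j <;> simp [hrec] <;> ring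

theorem doubling_of_recurrence (h0 : f 0 = 0) (h1 : f 1 = 1)
    (hrec : ∀ n, f (n + 2) = a * f (n + 1) + f n) (k : ℕ) :
    !![f (2 * k + 1), f (2 * k + 2); f (2 * k + 2), f (2 * k + 3)] =
      !![f k, f (k + 1); f (k + 1), f (k + 2)] * !![f k, f (k + 1); f (k + 1), f (k + 2)] := by
  have h := pow_succ_eq_of_recurrence h0 h1 hrec
  rw [← h k, ← pow_add, show k + 1 + (k + 1) = 2 * k + 1 + 1 by ring, h]

end Recurrence

theorem cassini_of_recurrence {R : Type*} [CommRing R] {a : R} {f : ℕ → R}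
    (h0 : f 0 = 0) (h1 : f 1 = 1) (hrec : ∀ n, f (n + 2) = a * f (n + 1) + f n) (k : ℕ) :
    f k * f (k + 2) - f (k + 1) ^ 2 = (-1) ^ (k + 1) := by
  have := congrArg det (pow_succ_eq_of_recurrence h0 h1 hrec k)
  simpa [det_pow, det_fin_two_of, sq] using this.symm

theorem inv_smul_eq_of_mul_self {n K : Type*} [Fintype n] [DecidableEq n] [Field K]
    {P : Matrix n n K} {d : K} (hP : P * P = d • 1) {c : K} (h : c * d ≠ 0) :
    (c • P)⁻¹ = (c * d)⁻¹ • P := by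
  refine inv_eq_right_inv ?_
  rw [smul_mul_smul_comm, hP, smul_smul, mul_right_comm, mul_inv_cancel₀ h, one_smul]

theorem Int.exists_cast_eq_inv_mul_iff {d : ℤ} (hd : d ≠ 0) (t : ℤ) :
    (∃ z : ℤ, ((d : ℚ)⁻¹ * t) = z) ↔ d ∣ t := by
  have hd' : (d : ℚ) ≠ 0 := Int.cast_ne_zero.mpr hd
  constructor
  · rintro ⟨z, hz⟩
    refine ⟨z, ?_⟩
    rw [inv_mul_eq_iff_eq_mul₀ hd'] at hz
    exact_mod_cast hz
  · rintro ⟨z, rfl⟩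
    exact ⟨z, by push_cast; field_simp⟩

theorem forall_exists_intCast_iff_dvd {n : Type*} [Fintype n] [DecidableEq n]
    {P : Matrix n n ℤ} {d : ℤ} (hP : P * P = d • 1) {c : ℤ} (h : c * d ≠ 0)
    (X : Matrix n n ℤ) :
    (∀ i j, ∃ z : ℤ, (X.map (Int.castRingHom ℚ) *
        ((c : ℚ) • P.map (Int.castRingHom ℚ))⁻¹ : Matrix n n ℚ) i j = z) ↔
      ∀ i j, c * d ∣ (X * P) i j := by
  have hPq : P.map (Int.castRingHom ℚ) * P.map (Int.castRingHom ℚ) = (d : ℚ) • 1 := by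
    rw [← Matrix.map_mul, hP, smul_one_eq_diagonal, smul_one_eq_diagonal,
      diagonal_map (map_zero _)]
    simp
  rw [inv_smul_eq_of_mul_self hPq (by exact_mod_cast h)]
  simp only [Matrix.mul_smul, ← Matrix.map_mul, Matrix.smul_apply, Matrix.map_apply, smul_eq_mul,
    eq_intCast, ← Int.cast_mul, Int.exists_cast_eq_inv_mul_iff h]

section Symplectic

variable {R : Type*} [CommRing R]

theorem mul_self_symplectic (a : R) :
    !![2, a; a, -2] * !![2, a; a, -2] = (a ^ 2 + 4) • (1 : Matrix (Fin 2) (Fin 2) R) := by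
  ext i j
  fin_cases i <;> fin_cases j <;> simp <;> ring

theorem mul_self_sub_one_mul_symplectic (a x y : R) :
    (!![x, y; y, x + a * y] * !![x, y; y, x + a * y] - 1) * !![2, a; a, -2] =
      ((a ^ 2 + 4) * y) • !![y, -x; x + a * y, -y] +
        (x * (x + a * y) - y ^ 2 - 1) • !![2, a; a, -2] := by
  ext i j
  fin_cases i <;> fin_cases j <;> simp [Matrix.mul_apply, Fin.sum_univ_two, Matrix.one_apply] <;>
    ring

end Symplectic

theorem forall_dvd_mul_iff_of_isCoprime {m x y z : ℤ} (hxy : IsCoprime x y) :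
    (∀ i j, m ∣ y * !![y, -x; z, -y] i j) ↔ m ∣ y := by
  refine ⟨fun h => ?_, fun h i j => dvd_mul_of_dvd_left h _⟩
  obtain ⟨u, v, huv⟩ := hxy
  have hyy : m ∣ y * y := by simpa using h 0 0
  have hyx : m ∣ y * x := by simpa using h 0 1
  rw [show y = u * (y * x) + v * (y * y) by linear_combination (-y) * huv]
  exact dvd_add (dvd_mul_of_dvd_right hyx u) (dvd_mul_of_dvd_right hyy v)

theorem forall_dvd_mul_self_sub_one_mul_symplectic_iff {a m x y : ℤ} (ha : a ^ 2 + 4 ≠ 0)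
    (hdet : x * (x + a * y) - y ^ 2 = 1) :
    (∀ i j, m * (a ^ 2 + 4) ∣
        ((!![x, y; y, x + a * y] * !![x, y; y, x + a * y] - 1) * !![2, a; a, -2]) i j) ↔
      m ∣ y := by
  have hxy : IsCoprime x y := ⟨x + a * y, -y, by linear_combination hdet⟩
  simp only [mul_self_sub_one_mul_symplectic, hdet, sub_self, zero_smul, add_zero, mul_smul,
    Matrix.smul_apply, smul_eq_mul, mul_comm m, mul_dvd_mul_iff_left ha]
  exact forall_dvd_mul_iff_of_isCoprime hxy

theorem not_sq_add_four_dvd_mul_sub_four {a : ℤ} (ha : a ≠ 0) (c : ℤ) :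
    ¬ a ^ 2 + 4 ∣ (a ^ 2 + 4) * c - 4 := by
  intro h
  have h4 : a ^ 2 + 4 ∣ 4 := by simpa using dvd_sub (dvd_mul_right _ c) h
  have := Int.le_of_dvd (by norm_num) h4
  nlinarith [sq_pos_of_ne_zero ha]

theorem not_forall_dvd_mul_self_sub_one_mul_symplectic {a m x y : ℤ} (ha : a ≠ 0)
    (hdet : x * (x + a * y) - y ^ 2 = -1) :
    ¬ ∀ i j, m * (a ^ 2 + 4) ∣
        ((!![x, y; y, x + a * y] * !![x, y; y, x + a * y] - 1) * !![2, a; a, -2]) i j := by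
  intro h
  apply not_sq_add_four_dvd_mul_sub_four ha (y ^ 2)
  have h00 := (dvd_mul_left (a ^ 2 + 4) m).trans (h 0 0)
  simp only [mul_self_sub_one_mul_symplectic, hdet, Matrix.add_apply, Matrix.smul_apply,
    smul_eq_mul, of_apply, cons_val', cons_val_zero, empty_val', cons_val_fin_one] at h00
  rwa [show (a ^ 2 + 4) * y * y + (-1 - 1) * 2 = (a ^ 2 + 4) * y ^ 2 - 4 by ring] at h00

theorem integrality_criterion_symplectic (a m : ℤ) (ha : 1 ≤ a) (hm : 1 ≤ m)
    (f : ℕ → ℤ) (h0 : f 0 = 0) (h1 : f 1 = 1)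
    (hrec : ∀ n, f (n + 2) = a * f (n + 1) + f n) (n : ℕ) (hn : 0 < n) :
    (∀ i j : Fin 2,
        ∃ z : ℤ,
          (((!![(f (2 * n - 1) : ℚ), (f (2 * n) : ℚ);
                (f (2 * n) : ℚ), (f (2 * n + 1) : ℚ)] - 1) *
              ((m : ℚ) • !![2, (a : ℚ); (a : ℚ), -2])⁻¹) i j) = (z : ℚ)) ↔
      (Even n ∧ m ∣ f n) := by
  obtain ⟨k, rfl⟩ : ∃ k, n = k + 1 := ⟨n - 1, by omega⟩
  have hz : f (k + 2) = f k + a * f (k + 1) := by rw [hrec]; ring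
  have hcassini := cassini_of_recurrence h0 h1 hrec k
  have hsquare := doubling_of_recurrence h0 h1 hrec k
  rw [hz] at hcassini hsquare
  rw [show 2 * (k + 1) - 1 = 2 * k + 1 by omega, show 2 * (k + 1) + 1 = 2 * k + 3 by ring,
    show 2 * (k + 1) = 2 * k + 2 by ring]
  have hM : !![(f (2 * k + 1) : ℚ), f (2 * k + 2); f (2 * k + 2), f (2 * k + 3)] - 1 =
      (!![f (2 * k + 1), f (2 * k + 2); f (2 * k + 2), f (2 * k + 3)] - 1).map
        (Int.castRingHom ℚ) := by
    ext i j; fin_cases i <;> fin_cases j <;> simp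
  have hP : !![2, (a : ℚ); (a : ℚ), -2] = (!![2, a; a, -2]).map (Int.castRingHom ℚ) := by
    ext i j; fin_cases i <;> fin_cases j <;> simp
  have hD : a ^ 2 + 4 ≠ 0 := by positivity
  rw [hM, hP, forall_exists_intCast_iff_dvd (mul_self_symplectic a) (mul_ne_zero (by omega) hD),
    hsquare]
  rcases Nat.even_or_odd (k + 1) with heven | hodd
  · rw [heven.neg_one_pow] at hcassini
    rw [forall_dvd_mul_self_sub_one_mul_symplectic_iff hD hcassini, and_iff_right heven]
  · rw [hodd.neg_one_pow] at hcassini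
    simp only [Nat.not_even_iff_odd.mpr hodd, false_and, iff_false]
    exact not_forall_dvd_mul_self_sub_one_mul_symplectic (by omega) hcassini
end
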